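/- For every real β with |β| < 4, ∑_{n=1}^∞ 1/( n · √(4n² − β) · (2n + √(4n² − β)) ) = ∑_{j=1}^∞ (2j−1)!! · ζ(2j+1) · β^{j−1} / ( 8^j · j! ), where ζ(2j+1) = ∑_{m=1}^∞ m^{−(2j+1)} is the Riemann zeta value, (2j−1)!! = 1·3·5·⋯·(2j−1), and both series converge absolutely. Equivalently, θ(β) = −∑_{j=1}^∞ (2j−1)!! ζ(2j+1) β^{j−1} / (8^j j!). -/

import Mathlib

/-!
Put `x = β / (4n²)`, so that `|x| < 1` and `√(4n² - β) = 2n √(1 - x)`. The `n`-th summand is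
then `((1 - x)^(-1/2) - 1) / (4n³ x)`, and the binomial series
`(1 - x)^(-1/2) = ∑ (2j-1)!! / (2^j j!) xʲ` expands it as
`∑_{j ≥ 1} (2j-1)!! β^(j-1) / (8ʲ j! n^(2j+1))`.
Since `(2j-1)!! ≤ (2j)!! = 2ʲ j!`, this double series is dominated by `n⁻³ (|β|/4)^(j-1)`, so it
converges absolutely and the order of summation may be exchanged; summing over `n` first produces
`ζ(2j+1)`.
-/

open Nat Real

noncomputable def theta (β : ℝ) : ℝ :=
  -∑' n : ℕ+, 1/(((n:ℕ):ℝ) * Real.sqrt (4*((n:ℕ):ℝ)^2 - β) *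
      (2*((n:ℕ):ℝ) + Real.sqrt (4*((n:ℕ):ℝ)^2 - β)))

theorem Nat.doubleFactorial_le_succ : ∀ n : ℕ, n‼ ≤ (n + 1)‼
  | 0 | 1 => by decide
  | n + 2 => by
    rw [doubleFactorial_add_two, show n + 2 + 1 = n + 1 + 2 by rfl, doubleFactorial_add_two]
    exact Nat.mul_le_mul (by omega) (doubleFactorial_le_succ n)

lemma Nat.doubleFactorial_two_mul_sub_one_le (j : ℕ) : (2 * j - 1)‼ ≤ 2 ^ j * j ! := by
  rw [← doubleFactorial_two_mul]
  rcases j with _ | j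
  · simp
  · simpa [show 2 * (j + 1) = 2 * j + 1 + 1 by ring] using doubleFactorial_le_succ (2 * j + 1)

theorem Summable.summable_abs_tsum_fst {α β : Type*} {f : α × β → ℝ} (hf : Summable f) :
    Summable fun b => |∑' a, f (a, b)| :=
  hf.abs.prod_symm.prod.of_nonneg_of_le (fun _ => abs_nonneg _) fun b => by
    exact norm_tsum_le_tsum_norm (f := fun a => f (a, b)) (hf.abs.prod_symm.prod_factor b)

lemma ascPochhammer_eval_half (j : ℕ) :
    (ascPochhammer ℝ j).eval (1 / 2) = ((2 * j - 1)‼ : ℝ) / 2 ^ j := by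
  induction j with
  | zero => simp
  | succ j ih =>
    rw [ascPochhammer_succ_eval, ih]
    rcases j with _ | j
    · norm_num
    · rw [show 2 * (j + 1 + 1) - 1 = 2 * j + 1 + 2 by omega, doubleFactorial_add_two,
        show 2 * (j + 1) - 1 = 2 * j + 1 by omega]
      push_cast
      field_simp
      ring

lemma Ring.choose_half_add_sub_one (j : ℕ) :
    Ring.choose ((1 / 2 : ℝ) + j - 1) j = ((2 * j - 1)‼ : ℝ) / (2 ^ j * j !) := by
  have h := Ring.factorial_nsmul_multichoose_eq_ascPochhammer (1 / 2 : ℝ) j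
  rw [Ring.multichoose_eq, Polynomial.ascPochhammer_smeval_eq_eval, ascPochhammer_eval_half,
    nsmul_eq_mul] at h
  rw [eq_div_iff (by positivity), mul_comm, mul_assoc, h]
  field_simp

lemma hasSum_one_div_sqrt_one_sub {x : ℝ} (hx : |x| < 1) :
    HasSum (fun j : ℕ => ((2 * j - 1)‼ : ℝ) / (2 ^ j * j !) * x ^ j) (1 / √(1 - x)) := by
  have h := (Real.one_div_one_sub_rpow_hasFPowerSeriesOnBall_zero (1 / 2)).hasSum
    (y := x) (by simpa [Metric.mem_eball, edist_dist, Real.dist_eq] using hx)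
  simpa only [FormalMultilinearSeries.ofScalars_apply_eq, Ring.choose_half_add_sub_one, smul_eq_mul,
    zero_add, ← Real.sqrt_eq_rpow] using h

-- The sum is `((1 - x)^(-1/2) - 1) / x`, written in a form that is also right at `x = 0`.
lemma hasSum_succ_one_div_sqrt_one_sub {x : ℝ} (hx : |x| < 1) :
    HasSum (fun j : ℕ => ((2 * (j + 1) - 1)‼ : ℝ) / (2 ^ (j + 1) * (j + 1)!) * x ^ j)
      (1 / (√(1 - x) * (1 + √(1 - x)))) := by
  rcases eq_or_ne x 0 with rfl | hx0
  · convert hasSum_single (f := fun j : ℕ => ((2 * (j + 1) - 1)‼ : ℝ) / (2 ^ (j + 1) * (j + 1)!) *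
      (0 : ℝ) ^ j) 0 (fun j hj => by simp [hj]) using 1
    norm_num
  have hsq : √(1 - x) ^ 2 = 1 - x := Real.sq_sqrt (by linarith [le_abs_self x])
  have hs : 0 < √(1 - x) := Real.sqrt_pos.mpr (by linarith [le_abs_self x])
  have hs1 : √(1 - x) ≠ 1 := fun h => hx0 (by nlinarith)
  have h := ((hasSum_nat_add_iff' 1).mpr (hasSum_one_div_sqrt_one_sub hx)).mul_left x⁻¹
  have hval : 1 / (√(1 - x) * (1 + √(1 - x))) = x⁻¹ * (1 / √(1 - x) - 1) := by
    field_simp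
    linear_combination hsq
  rw [hval]
  refine (by simpa using h : HasSum _ (x⁻¹ * (1 / √(1 - x) - 1))).congr_fun fun j => ?_
  field_simp
  ring

noncomputable def thetaTaylorTerm (β : ℝ) (j : ℕ) : ℝ :=
  (2 * j - 1)‼ * β ^ (j - 1) / (8 ^ j * j !)

lemma hasSum_thetaTaylorTerm_mul_one_div_pow {β N : ℝ} (hN : 0 < N) (hβ : |β| < 4 * N ^ 2) :
    HasSum (fun j : ℕ+ => thetaTaylorTerm β j * (1 / N ^ (2 * (j : ℕ) + 1)))
      (1 / (N * √(4 * N ^ 2 - β) * (2 * N + √(4 * N ^ 2 - β)))) := by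
  have hN2 : 0 < 4 * N ^ 2 := by positivity
  set x := β / (4 * N ^ 2) with hx_def
  have hx : |x| < 1 := by rwa [abs_div, abs_of_pos hN2, div_lt_one hN2]
  have hs : 0 < √(1 - x) := Real.sqrt_pos.mpr (by linarith [le_abs_self x])
  have hsqrt : √(4 * N ^ 2 - β) = 2 * N * √(1 - x) := by
    rw [show 4 * N ^ 2 - β = (2 * N) ^ 2 * (1 - x) by rw [hx_def]; field_simp; ring,
      Real.sqrt_mul (by positivity), Real.sqrt_sq (by positivity)]
  have hval : 1 / (N * (2 * N * √(1 - x)) * (2 * N + 2 * N * √(1 - x)))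
      = 1 / (4 * N ^ 3) * (1 / (√(1 - x) * (1 + √(1 - x)))) := by
    field_simp
    ring
  rw [hasSum_pnat_iff_hasSum_succ (f := fun j : ℕ => thetaTaylorTerm β j * (1 / N ^ (2 * j + 1))),
    hsqrt, hval]
  refine ((hasSum_succ_one_div_sqrt_one_sub hx).mul_left _).congr_fun fun j => ?_
  rw [thetaTaylorTerm, hx_def, Nat.add_sub_cancel, div_pow, mul_pow, ← pow_mul,
    show (8 : ℝ) ^ (j + 1) = 2 ^ (j + 1) * 4 ^ (j + 1) by rw [← mul_pow]; norm_num]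
  field_simp
  ring

lemma abs_thetaTaylorTerm_le (β : ℝ) (j : ℕ) : |thetaTaylorTerm β j| ≤ (|β| / 4) ^ (j - 1) := by
  have hdf : ((2 * j - 1)‼ : ℝ) ≤ 2 ^ j * j ! := by
    exact_mod_cast doubleFactorial_two_mul_sub_one_le j
  have h4 : (4 : ℝ) ^ (j - 1) ≤ 4 ^ j := pow_le_pow_right₀ (by norm_num) (Nat.sub_le j 1)
  rw [thetaTaylorTerm, abs_div, abs_mul, abs_pow, Nat.abs_cast,
    abs_of_pos (by positivity : (0 : ℝ) < 8 ^ j * j !), div_pow]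
  calc ((2 * j - 1)‼ : ℝ) * |β| ^ (j - 1) / (8 ^ j * j !)
      ≤ 2 ^ j * j ! * |β| ^ (j - 1) / (8 ^ j * j !) := by gcongr
    _ = |β| ^ (j - 1) / 4 ^ j := by
      rw [show (8 : ℝ) ^ j = 2 ^ j * 4 ^ j by rw [← mul_pow]; norm_num]
      field_simp
    _ ≤ |β| ^ (j - 1) / 4 ^ (j - 1) := by gcongr

lemma summable_thetaTaylorTerm_mul_one_div_pow {β : ℝ} (hβ : |β| < 4) :
    Summable fun p : ℕ+ × ℕ+ =>
      thetaTaylorTerm β p.2 * (1 / ((p.1 : ℕ) : ℝ) ^ (2 * (p.2 : ℕ) + 1)) := by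
  have hzeta : Summable fun n : ℕ+ => 1 / ((n : ℕ) : ℝ) ^ 3 :=
    summable_pnat_iff_summable_nat.mpr (Real.summable_one_div_nat_pow.mpr (by norm_num))
  have hgeom : Summable fun j : ℕ+ => (|β| / 4) ^ ((j : ℕ) - 1) := by
    rw [summable_pnat_iff_summable_succ (f := fun j => (|β| / 4) ^ (j - 1))]
    simpa using summable_geometric_of_lt_one (by positivity) (by linarith : |β| / 4 < 1)
  refine (summable_mul_of_summable_norm (R := ℝ) hzeta.norm hgeom.norm).of_norm_bounded
    fun ⟨n, j⟩ => ?_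
  have hn : (1 : ℝ) ≤ (n : ℕ) := by exact_mod_cast n.pos
  rw [Real.norm_eq_abs, abs_mul, mul_comm, abs_of_pos (by positivity)]
  gcongr
  · show 3 ≤ 2 * (j : ℕ) + 1
    have := j.pos
    omega
  · exact abs_thetaTaylorTerm_le β j

/-- for `|β| < 4`,
`∑_{n≥1} 1/( n √(4n²-β) (2n+√(4n²-β)) ) = ∑_{j≥1} (2j-1)!! ζ(2j+1) β^{j-1} / (8^j j!)`,
where `ζ(2j+1) = ∑_{m≥1} m^{-(2j+1)}`; both series converge absolutely. Equivalently,
`θ(β) = -∑_{j≥1} (2j-1)!! ζ(2j+1) β^{j-1} / (8^j j!)`. -/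
theorem stmt13 (β : ℝ) (hβ : |β| < 4) :
    Summable (fun n : ℕ+ => 1/(((n:ℕ):ℝ) * Real.sqrt (4*((n:ℕ):ℝ)^2 - β) *
      (2*((n:ℕ):ℝ) + Real.sqrt (4*((n:ℕ):ℝ)^2 - β)))) ∧
    Summable (fun j : ℕ+ =>
      |((Nat.doubleFactorial (2*(j:ℕ) - 1) : ℝ) *
          (∑' m : ℕ+, 1/((m:ℕ):ℝ)^(2*(j:ℕ)+1)) * β^((j:ℕ) - 1)) /
        ((8:ℝ)^(j:ℕ) * (Nat.factorial (j:ℕ) : ℝ))|) ∧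
    (∑' n : ℕ+, 1/(((n:ℕ):ℝ) * Real.sqrt (4*((n:ℕ):ℝ)^2 - β) *
        (2*((n:ℕ):ℝ) + Real.sqrt (4*((n:ℕ):ℝ)^2 - β))))
      = ∑' j : ℕ+, ((Nat.doubleFactorial (2*(j:ℕ) - 1) : ℝ) *
          (∑' m : ℕ+, 1/((m:ℕ):ℝ)^(2*(j:ℕ)+1)) * β^((j:ℕ) - 1)) /
          ((8:ℝ)^(j:ℕ) * (Nat.factorial (j:ℕ) : ℝ)) ∧
    theta β
      = -∑' j : ℕ+, ((Nat.doubleFactorial (2*(j:ℕ) - 1) : ℝ) *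
          (∑' m : ℕ+, 1/((m:ℕ):ℝ)^(2*(j:ℕ)+1)) * β^((j:ℕ) - 1)) /
          ((8:ℝ)^(j:ℕ) * (Nat.factorial (j:ℕ) : ℝ)) := by
  have hF := summable_thetaTaylorTerm_mul_one_div_pow hβ
  have hrow (n : ℕ+) := hasSum_thetaTaylorTerm_mul_one_div_pow (β := β) (N := (n : ℕ))
    (by exact_mod_cast n.pos)
    (by nlinarith [abs_nonneg β, (by exact_mod_cast n.pos : (1 : ℝ) ≤ (n : ℕ))])
  have hcol (j : ℕ+) : ∑' n : ℕ+, thetaTaylorTerm β j * (1 / ((n : ℕ) : ℝ) ^ (2 * (j : ℕ) + 1))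
      = ((2 * (j : ℕ) - 1)‼ * (∑' m : ℕ+, 1 / ((m : ℕ) : ℝ) ^ (2 * (j : ℕ) + 1)) *
          β ^ ((j : ℕ) - 1)) / (8 ^ (j : ℕ) * (j : ℕ)!) := by
    rw [tsum_mul_left, thetaTaylorTerm]
    ring
  have hsum : ∑' n : ℕ+, 1 / (((n : ℕ) : ℝ) * √(4 * ((n : ℕ) : ℝ) ^ 2 - β) *
        (2 * ((n : ℕ) : ℝ) + √(4 * ((n : ℕ) : ℝ) ^ 2 - β)))
      = ∑' j : ℕ+, ((2 * (j : ℕ) - 1)‼ * (∑' m : ℕ+, 1 / ((m : ℕ) : ℝ) ^ (2 * (j : ℕ) + 1)) *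
          β ^ ((j : ℕ) - 1)) / (8 ^ (j : ℕ) * (j : ℕ)!) := by
    rw [tsum_congr fun n => (hrow n).tsum_eq.symm, ← tsum_congr hcol,
      Summable.tsum_comm (f := fun n j : ℕ+ => thetaTaylorTerm β j *
        (1 / ((n : ℕ) : ℝ) ^ (2 * (j : ℕ) + 1))) hF]
  refine ⟨hF.prod.congr fun n => (hrow n).tsum_eq, ?_, hsum, by rw [theta, hsum]⟩
  simpa only [hcol] using hF.summable_abs_tsum_fst
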